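/- If there exist x ∈ ℝ and a in the unit sphere of ℓ² with P(a·ε ≥ x) > M⁼(x), then there exist n ∈ ℕ and b in the unit sphere of ℓ² supported on the first n coordinates with P(b·ε ≥ x) > M⁼ₙ(x), where M⁼ₙ(x) := max_{1 ≤ j ≤ n} P(e_j·ε ≥ x). In other words, a counterexample to the infinite-dimensional Edelman conjecture yields a counterexample to the finite-dimensional conjecture. -/

import Mathlib

open MeasureTheory ProbabilityTheory Filter

/-- The standard normal tail function. -/
noncomputable def normalTail (x : ℝ) : ℝ :=
  ∫ u in Set.Ici x, (Real.sqrt (2 * Real.pi))⁻¹ * Real.exp (-u ^ 2 / 2)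

/-- `ε` is a sequence of independent Rademacher random variables on `(Ω, μ)`. -/
def IsRademacherSeq {Ω : Type*} [MeasurableSpace Ω] (μ : Measure Ω) (ε : ℕ → Ω → ℝ) : Prop :=
  (∀ i, Measurable (ε i)) ∧ iIndepFun ε μ ∧
    ∀ i, μ {ω | ε i ω = 1} = 1/2 ∧ μ {ω | ε i ω = -1} = 1/2

/-- `P(a·ε ≥ x)`, where `a·ε` is the a.s. limit of the partial sums `∑_{i<n} aᵢ εᵢ`. -/
noncomputable def tailProb {Ω : Type*} [MeasurableSpace Ω] (μ : Measure Ω) (ε : ℕ → Ω → ℝ)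
    (a : ℕ → ℝ) (x : ℝ) : ℝ :=
  (μ {ω | ∃ s, x ≤ s ∧
      Tendsto (fun n => ∑ i ∈ Finset.range n, a i * ε i ω) atTop (nhds s)}).toReal

/-- `P(eₙ·ε ≥ x) = P((ε₁+⋯+εₙ)/√n ≥ x)`. -/
noncomputable def eqTail {Ω : Type*} [MeasurableSpace Ω] (μ : Measure Ω) (ε : ℕ → Ω → ℝ)
    (n : ℕ) (x : ℝ) : ℝ :=
  (μ {ω | x ≤ (∑ i ∈ Finset.range n, ε i ω) / Real.sqrt n}).toReal

/-- `P(f_{n,t}·ε ≥ x)` where `f_{n,t}·ε = √((1-t²)/n)(ε₁+⋯+εₙ) + t ε_{n+1}`. -/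
noncomputable def fTail {Ω : Type*} [MeasurableSpace Ω] (μ : Measure Ω) (ε : ℕ → Ω → ℝ)
    (n : ℕ) (t x : ℝ) : ℝ :=
  (μ {ω | x ≤ Real.sqrt ((1 - t ^ 2) / n) * (∑ i ∈ Finset.range n, ε i ω) + t * ε n ω}).toReal

/-- The maximal tail `M(x)`: supremum of `P(a·ε ≥ x)` over the unit sphere of `ℓ²`. -/
noncomputable def Mtail {Ω : Type*} [MeasurableSpace Ω] (μ : Measure Ω) (ε : ℕ → Ω → ℝ)
    (x : ℝ) : ℝ :=
  sSup {p | ∃ a : ℕ → ℝ, (∑' i, (a i) ^ 2) = 1 ∧ p = tailProb μ ε a x}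

/-- `M⁼(x) = sup_{n ≥ 1} P(eₙ·ε ≥ x)`. -/
noncomputable def Meq {Ω : Type*} [MeasurableSpace Ω] (μ : Measure Ω) (ε : ℕ → Ω → ℝ)
    (x : ℝ) : ℝ :=
  sSup {p | ∃ n : ℕ, 1 ≤ n ∧ p = eqTail μ ε n x}

/-- `Mₙ(x)`: supremum over unit vectors supported on the first `n` coordinates. -/
noncomputable def Mn {Ω : Type*} [MeasurableSpace Ω] (μ : Measure Ω) (ε : ℕ → Ω → ℝ)
    (n : ℕ) (x : ℝ) : ℝ :=
  sSup {p | ∃ a : ℕ → ℝ, (∑' i, (a i) ^ 2) = 1 ∧ (∀ i, n ≤ i → a i = 0) ∧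
    p = tailProb μ ε a x}

/-- `M⁼ₙ(x) = max_{1 ≤ j ≤ n} P(e_j·ε ≥ x)`. -/
noncomputable def Meqn {Ω : Type*} [MeasurableSpace Ω] (μ : Measure Ω) (ε : ℕ → Ω → ℝ)
    (n : ℕ) (x : ℝ) : ℝ :=
  sSup {p | ∃ j : ℕ, 1 ≤ j ∧ j ≤ n ∧ p = eqTail μ ε j x}

/-!
A counterexample `a` with finite support is already finite-dimensional, since `M⁼ₙ ≤ M⁼`.
Otherwise `a` is the limit of its normalised truncations `a|ₙ / ‖a|ₙ‖`, and the event
`{a·ε > x}` lies in the lim inf of the events `{a|ₙ·ε ≥ x ‖a|ₙ‖}`; so if no truncation beat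
`M⁼ₙ(x) ≤ M⁼(x)`, neither would `P(a·ε > x)`. The boundary `{a·ε = x}` is null: choosing indices
`j 0, j 1, …` with `2 |a (j (k+1))| ≤ |a (j k)|`, the `2^m` sign patterns of
`ε (j 0), …, ε (j (m-1))` shift the independent remainder of the series by pairwise distinct
amounts, so `P(a·ε = x) ≤ 2^{-m}` for every `m`.
-/

open Finset Function

theorem two_mul_abs_le_abs_sum_sub_mul {c σ τ : ℕ → ℝ} (hc : ∀ k, 2 * |c (k + 1)| ≤ |c k|)
    (hσ : ∀ k, σ k = 1 ∨ σ k = -1) (hτ : ∀ k, τ k = 1 ∨ τ k = -1) (m : ℕ)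
    (hστ : ∃ k ≤ m, σ k ≠ τ k) :
    2 * |c m| ≤ |∑ k ∈ range (m + 1), (σ k - τ k) * c k| := by
  have hsign : ∀ k, |σ k - τ k| = if σ k = τ k then 0 else 2 := by
    intro k
    rcases hσ k with h | h <;> rcases hτ k with h' | h' <;> norm_num [h, h']
  induction m with
  | zero =>
    obtain ⟨k, hk, hne⟩ := hστ
    obtain rfl : k = 0 := by omega
    simp [abs_mul, hsign, hne]
  | succ m ih =>
    obtain ⟨k, hk, hne⟩ := hστ
    rw [sum_range_succ]
    by_cases hlow : ∃ k ≤ m, σ k ≠ τ k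
    · have hlast : |(σ (m + 1) - τ (m + 1)) * c (m + 1)| ≤ 2 * |c (m + 1)| := by
        rw [abs_mul, hsign]; split_ifs <;> simp
      linarith [ih hlow, hc m, abs_sub_abs_le_abs_add
        (∑ k ∈ range (m + 1), (σ k - τ k) * c k) ((σ (m + 1) - τ (m + 1)) * c (m + 1))]
    · push Not at hlow
      obtain rfl : k = m + 1 := by by_contra h; exact hne (hlow k (by omega))
      have hzero : ∑ k ∈ range (m + 1), (σ k - τ k) * c k = 0 :=
        sum_eq_zero fun i hi => by
          rw [hlow i (by simpa [Nat.lt_succ_iff] using hi), sub_self, zero_mul]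
      simp [hzero, abs_mul, hsign, hne]

theorem eqOn_of_sum_mul_eq {c σ τ : ℕ → ℝ} (hc0 : ∀ k, c k ≠ 0)
    (hc : ∀ k, 2 * |c (k + 1)| ≤ |c k|) (hσ : ∀ k, σ k = 1 ∨ σ k = -1)
    (hτ : ∀ k, τ k = 1 ∨ τ k = -1) {m : ℕ}
    (h : ∑ k ∈ range m, σ k * c k = ∑ k ∈ range m, τ k * c k) : ∀ k < m, σ k = τ k := by
  by_contra! ⟨k, hk, hστ⟩
  obtain ⟨m, rfl⟩ : ∃ m', m = m' + 1 := ⟨m - 1, by omega⟩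
  have hsep := two_mul_abs_le_abs_sum_sub_mul hc hσ hτ m ⟨k, by omega, hστ⟩
  simp only [sub_mul, sum_sub_distrib, h, sub_self, abs_zero] at hsep
  exact hc0 m (abs_eq_zero.mp (by linarith [abs_nonneg (c m)]))

theorem exists_injective_two_mul_abs_le {a : ℕ → ℝ} (hinf : {i | a i ≠ 0}.Infinite)
    (ha : Tendsto a atTop (nhds 0)) :
    ∃ j : ℕ → ℕ, Injective j ∧ (∀ k, a (j k) ≠ 0) ∧ ∀ k, 2 * |a (j (k + 1))| ≤ |a (j k)| := by
  obtain ⟨j, hj0, hj⟩ := exists_seq_of_forall_finset_exists (fun i => a i ≠ 0)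
    (fun i i' => 2 * |a i'| < |a i|) fun s hs => by
      have hsmall : ∀ᶠ i in atTop, ∀ x ∈ s, 2 * |a i| < |a x| :=
        (s.eventually_all).2 fun x hx => by
          have hpos : 0 < |a x| / 2 := by have := abs_pos.2 (hs x hx); positivity
          filter_upwards [(tendsto_zero_iff_abs_tendsto_zero a).1 ha |>.eventually
            (gt_mem_nhds hpos)] with i (hi : |a i| < |a x| / 2)
          linarith
      exact (hsmall.and_frequently (Nat.frequently_atTop_iff_infinite.2 hinf)).exists.imp
        fun i hi => ⟨hi.2, hi.1⟩
  have hanti : StrictAnti fun k => |a (j k)| := fun m n hmn => by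
    linarith [hj m n hmn, abs_nonneg (a (j n))]
  exact ⟨j, Injective.of_comp (f := fun i => |a i|) hanti.injective, hj0,
    fun k => (hj k (k + 1) k.lt_succ_self).le⟩

theorem measure_biUnion_inter_le_of_indep {Ω ι : Type*} {m₁ m₂ : MeasurableSpace Ω}
    [mΩ : MeasurableSpace Ω] {μ : Measure Ω} [IsProbabilityMeasure μ] (hm₂ : m₂ ≤ mΩ)
    (hind : Indep m₁ m₂ μ) {S : Finset ι} {F G : ι → Set Ω}
    (hF : ∀ i ∈ S, MeasurableSet[m₂] (F i)) (hG : ∀ i ∈ S, MeasurableSet[m₁] (G i))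
    (hdisj : (S : Set ι).PairwiseDisjoint F) {p : ENNReal} (hp : ∀ i ∈ S, μ (G i) ≤ p) :
    μ (⋃ i ∈ S, F i ∩ G i) ≤ p :=
  calc μ (⋃ i ∈ S, F i ∩ G i)
      ≤ ∑ i ∈ S, μ (G i ∩ F i) := by
        simp_rw [Set.inter_comm (F _)]; exact measure_biUnion_finset_le _ _
    _ = ∑ i ∈ S, μ (G i) * μ (F i) :=
        sum_congr rfl fun i hi => (Indep_iff _ _ _).1 hind _ _ (hG i hi) (hF i hi)
    _ ≤ ∑ i ∈ S, p * μ (F i) := by gcongr with i hi; exact hp i hi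
    _ = p * μ (⋃ i ∈ S, F i) := by
        rw [← mul_sum, measure_biUnion_finset hdisj fun i hi => hm₂ _ (hF i hi)]
    _ ≤ p := mul_le_of_le_one_right' prob_le_one

theorem eventually_sum_range_eq_sum_ite_add (f : ℕ → ℝ) (T : Finset ℕ) :
    ∀ᶠ n in atTop,
      ∑ i ∈ range n, f i = ∑ i ∈ range n, (if i ∈ T then 0 else f i) + ∑ i ∈ T, f i := by
  obtain ⟨N, hN⟩ := T.exists_nat_subset_range
  filter_upwards [eventually_ge_atTop N] with n hn
  rw [sum_ite, sum_const_zero, zero_add, add_comm,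
    ← sum_filter_add_sum_filter_not (range n) (· ∈ T), filter_mem_eq_inter,
    inter_eq_right.2 (hN.trans (range_subset_range.2 hn))]

theorem measurable_biSup_comap {Ω ι β : Type*} [mβ : MeasurableSpace β] (f : ι → Ω → β)
    {t : Set ι} {i : ι} (hi : i ∈ t) : Measurable[⨆ i ∈ t, mβ.comap (f i)] (f i) :=
  measurable_iff_comap_le.2 (le_iSup₂ (f := fun i (_ : i ∈ t) => mβ.comap (f i)) i hi)

theorem measure_setOf_eventually_mem_le {α : Type*} [MeasurableSpace α] {μ : Measure α}
    {s : ℕ → Set α} {c : ENNReal} (h : ∀ᶠ n in atTop, μ (s n) ≤ c) :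
    μ {ω | ∀ᶠ n in atTop, ω ∈ s n} ≤ c := by
  obtain ⟨N, hN⟩ := eventually_atTop.1 h
  have hset : {ω | ∀ᶠ n in atTop, ω ∈ s n} = ⋃ K, ⋂ n ≥ K, s n := by
    ext; simp [eventually_atTop]
  have hmono : Monotone fun K => ⋂ n ≥ K, s n := fun K L hKL =>
    Set.iInter₂_mono' fun n hn => ⟨n, hKL.trans hn, le_rfl⟩
  rw [hset, hmono.measure_iUnion]
  exact iSup_le fun K => (measure_mono (Set.biInter_subset_of_mem (le_max_left K N))).trans
    (hN _ (le_max_right K N))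

namespace IsRademacherSeq

variable {Ω : Type*} [MeasurableSpace Ω] {μ : Measure Ω} {ε : ℕ → Ω → ℝ}

theorem ae_eq_one_or_eq_neg_one [IsProbabilityMeasure μ] (hε : IsRademacherSeq μ ε) (i : ℕ) :
    ∀ᵐ ω ∂μ, ε i ω = 1 ∨ ε i ω = -1 := by
  have h₁ : MeasurableSet {ω | ε i ω = 1} := hε.1 i (measurableSet_singleton 1)
  have h₂ : MeasurableSet {ω | ε i ω = -1} := hε.1 i (measurableSet_singleton (-1))
  have hdisj : Disjoint {ω | ε i ω = 1} {ω | ε i ω = -1} :=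
    Set.disjoint_left.2 fun ω (h : ε i ω = 1) (h' : ε i ω = -1) => by linarith
  rw [ae_iff_measure_eq, Set.ofPred_or, measure_union hdisj h₂, (hε.2.2 i).1, (hε.2.2 i).2,
    ENNReal.add_halves, measure_univ]
  exact (h₁.union h₂).nullMeasurableSet

theorem measure_forall_lt_eq (hε : IsRademacherSeq μ ε) {j : ℕ → ℕ} (hj : Injective j)
    {σ : ℕ → ℝ} (hσ : ∀ k, σ k = 1 ∨ σ k = -1) (m : ℕ) :
    μ {ω | ∀ k < m, ε (j k) ω = σ k} = 2⁻¹ ^ m := by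
  have hset : {ω | ∀ k < m, ε (j k) ω = σ k} = ⋂ k ∈ range m, (fun k => ε (j k)) k ⁻¹' {σ k} :=
    by ext; simp
  rw [hset, (hε.2.1.precomp hj).meas_biInter fun k _ => ⟨{σ k}, measurableSet_singleton _, rfl⟩,
    prod_congr rfl fun k _ => ?_, prod_const, card_range]
  rcases hσ k with h | h
  · rw [h]; exact (hε.2.2 (j k)).1.trans (one_div 2)
  · rw [h]; exact (hε.2.2 (j k)).2.trans (one_div 2)

theorem measure_tendsto_sum_le_inv_two_pow [IsProbabilityMeasure μ] (hε : IsRademacherSeq μ ε)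
    {a : ℕ → ℝ} {j : ℕ → ℕ} (hj : Injective j) (ha0 : ∀ k, a (j k) ≠ 0)
    (ha : ∀ k, 2 * |a (j (k + 1))| ≤ |a (j k)|) (x : ℝ) (m : ℕ) :
    μ {ω | Tendsto (fun n => ∑ i ∈ range n, a i * ε i ω) atTop (nhds x)} ≤ 2⁻¹ ^ m := by
  classical
  set T := (range m).image j
  let sign (s : Finset ℕ) (k : ℕ) : ℝ := if k ∈ s then 1 else -1
  have hsign (s : Finset ℕ) (k : ℕ) : sign s k = 1 ∨ sign s k = -1 := by
    by_cases hk : k ∈ s <;> simp [sign, hk]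
  let shift (s : Finset ℕ) : ℝ := ∑ k ∈ range m, sign s k * a (j k)
  let F (s : Finset ℕ) : Set Ω := {ω | Tendsto (fun n => ∑ i ∈ range n,
    (if i ∈ T then 0 else a i * ε i ω)) atTop (nhds (x - shift s))}
  let G (s : Finset ℕ) : Set Ω := {ω | ∀ k < m, ε (j k) ω = sign s k}
  have hcover : {ω | Tendsto (fun n => ∑ i ∈ range n, a i * ε i ω) atTop (nhds x)}
      ≤ᵐ[μ] ⋃ s ∈ (range m).powerset, F s ∩ G s := by
    filter_upwards [ae_all_iff.2 hε.ae_eq_one_or_eq_neg_one] with ω hω hx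
    let s := (range m).filter fun k => ε (j k) ω = 1
    have hG : ω ∈ G s := fun k hk => by
      rcases hω (j k) with h | h <;> simp [sign, s, hk, h]
    have hshift : ∑ i ∈ T, a i * ε i ω = shift s := by
      rw [sum_image fun k _ l _ h => hj h]
      exact sum_congr rfl fun k hk => by rw [hG k (mem_range.1 hk), mul_comm]
    refine Set.mem_biUnion (mem_powerset.2 (filter_subset _ _)) ⟨?_, hG⟩
    refine ((hx.sub_const (shift s)).congr' ?_)
    filter_upwards [eventually_sum_range_eq_sum_ite_add (fun i => a i * ε i ω) T] with n hn
    rw [hn, hshift, add_sub_cancel_right]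
  have hshift_inj : Set.InjOn shift (range m).powerset := fun s hs t ht h => by
    have hst := eqOn_of_sum_mul_eq ha0 ha (hsign s) (hsign t) h
    ext k
    by_cases hk : k < m
    · have hk' := hst k hk
      by_cases hks : k ∈ s <;> by_cases hkt : k ∈ t <;> simp [sign, hks, hkt] at hk' ⊢ <;>
        norm_num at hk'
    · exact iff_of_false (fun h => hk (mem_range.1 (mem_powerset.1 hs h)))
        (fun h => hk (mem_range.1 (mem_powerset.1 ht h)))
  refine (measure_mono_ae hcover).trans (measure_biUnion_inter_le_of_indep
    (iSup₂_le fun i _ => (hε.1 i).comap_le)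
    (indep_biSup_compl (fun i => (hε.1 i).comap_le) hε.2.1.iIndep T) (fun s _ => ?_)
    (fun s _ => ?_) (fun s hs t ht hst => ?_)
    fun s _ => (hε.measure_forall_lt_eq hj (hsign s) m).le)
  · refine measurableSet_tendsto _ fun n => Finset.measurable_sum _ fun i _ => ?_
    by_cases hi : i ∈ T
    · simp only [hi, if_true]; exact measurable_const
    · simp only [hi, if_false]
      exact (measurable_biSup_comap ε (t := (T : Set ℕ)ᶜ) hi).const_mul _
  · simp only [G, Set.ofPred_forall]
    refine .iInter fun k => .iInter fun hk => measurableSet_eq_fun ?_ measurable_const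
    exact measurable_biSup_comap ε (t := (T : Set ℕ)) (mem_image_of_mem j (mem_range.2 hk))
  · have hne : x - shift s ≠ x - shift t := fun h => hst (hshift_inj hs ht (by linarith))
    exact Set.disjoint_left.2 fun ω h h' => hne (tendsto_nhds_unique h h')

theorem measure_tendsto_sum_eq_zero [IsProbabilityMeasure μ] (hε : IsRademacherSeq μ ε)
    {a : ℕ → ℝ} (hinf : {i | a i ≠ 0}.Infinite) (ha : Tendsto a atTop (nhds 0)) (x : ℝ) :
    μ {ω | Tendsto (fun n => ∑ i ∈ range n, a i * ε i ω) atTop (nhds x)} = 0 := by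
  obtain ⟨j, hj, ha0, ha2⟩ := exists_injective_two_mul_abs_le hinf ha
  exact le_antisymm (ge_of_tendsto' (ENNReal.tendsto_pow_atTop_nhds_zero_of_lt_one (by norm_num))
    (hε.measure_tendsto_sum_le_inv_two_pow hj ha0 ha2 x)) bot_le

end IsRademacherSeq

noncomputable def normalizedTruncation (a : ℕ → ℝ) (n : ℕ) (i : ℕ) : ℝ :=
  if i < n then a i / √(∑ k ∈ range n, a k ^ 2) else 0

theorem normalizedTruncation_of_le {a : ℕ → ℝ} {n i : ℕ} (h : n ≤ i) :
    normalizedTruncation a n i = 0 :=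
  if_neg (not_lt.2 h)

theorem tsum_normalizedTruncation_sq {a : ℕ → ℝ} {n : ℕ} (h : 0 < ∑ k ∈ range n, a k ^ 2) :
    ∑' i, normalizedTruncation a n i ^ 2 = 1 := by
  rw [tsum_eq_sum (s := range n) fun i hi => by
    rw [normalizedTruncation_of_le (by simpa using hi), sq, zero_mul]]
  rw [sum_congr rfl fun i hi => by
    rw [normalizedTruncation, if_pos (mem_range.1 hi), div_pow, Real.sq_sqrt h.le]]
  rw [← sum_div, div_self h.ne']

theorem sum_normalizedTruncation_mul (a y : ℕ → ℝ) (n : ℕ) :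
    ∑ i ∈ range n, normalizedTruncation a n i * y i =
      (∑ i ∈ range n, a i * y i) / √(∑ k ∈ range n, a k ^ 2) := by
  rw [sum_div]
  exact sum_congr rfl fun i hi => by
    rw [normalizedTruncation, if_pos (mem_range.1 hi), div_mul_eq_mul_div]

section Truncation

variable {Ω : Type*} [MeasurableSpace Ω] {μ : Measure Ω} {ε : ℕ → Ω → ℝ}

theorem tailProb_eq_of_forall_ge_eq_zero {b : ℕ → ℝ} {n : ℕ} (hb : ∀ i, n ≤ i → b i = 0)
    (x : ℝ) : tailProb μ ε b x = (μ {ω | x ≤ ∑ i ∈ range n, b i * ε i ω}).toReal := by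
  rw [tailProb]
  congr 2
  ext ω
  simp only [Set.mem_ofPred_eq]
  have hconst : Tendsto (fun k => ∑ i ∈ range k, b i * ε i ω) atTop
      (nhds (∑ i ∈ range n, b i * ε i ω)) := by
    refine tendsto_atTop_of_eventually_const (i₀ := n) fun k hk => (sum_subset
      (range_subset_range.2 hk) fun i _ hi => ?_).symm
    rw [hb i (by simpa using hi), zero_mul]
  exact ⟨fun ⟨s, hxs, hs⟩ => tendsto_nhds_unique hs hconst ▸ hxs, fun hx => ⟨_, hx, hconst⟩⟩

theorem tailProb_le_of_forall_truncation [IsProbabilityMeasure μ] (hε : IsRademacherSeq μ ε)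
    {a : ℕ → ℝ} (ha : ∑' i, a i ^ 2 = 1) (hinf : {i | a i ≠ 0}.Infinite) {x M : ℝ}
    (hM : ∀ n ≥ 1, ∀ b : ℕ → ℝ, ∑' i, b i ^ 2 = 1 → (∀ i, n ≤ i → b i = 0) →
      tailProb μ ε b x ≤ M) :
    tailProb μ ε a x ≤ M := by
  have hsum : Summable fun i => a i ^ 2 := by
    by_contra h
    rw [tsum_eq_zero_of_not_summable h] at ha
    exact zero_ne_one ha
  have hpartial : Tendsto (fun n => ∑ k ∈ range n, a k ^ 2) atTop (nhds 1) :=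
    (ha ▸ hsum.hasSum).tendsto_sum_nat
  have hnorm : Tendsto (fun n => √(∑ k ∈ range n, a k ^ 2)) atTop (nhds 1) := by
    simpa using hpartial.sqrt
  have ha0 : Tendsto a atTop (nhds 0) := by
    refine (tendsto_zero_iff_abs_tendsto_zero a).2 ?_
    simpa [Function.comp_def, Real.sqrt_sq_eq_abs] using hsum.tendsto_atTop_zero.sqrt
  let S (ω : Ω) (n : ℕ) : ℝ := ∑ i ∈ range n, a i * ε i ω
  let B (n : ℕ) : Set Ω := {ω | x ≤ S ω n / √(∑ k ∈ range n, a k ^ 2)}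
  have hB : ∀ᶠ n in atTop, (μ (B n)).toReal ≤ M := by
    filter_upwards [hpartial.eventually (eventually_gt_nhds one_pos), eventually_ge_atTop 1]
      with n hn hn1
    have h := hM n hn1 _ (tsum_normalizedTruncation_sq hn) fun i => normalizedTruncation_of_le
    rw [tailProb_eq_of_forall_ge_eq_zero (fun i => normalizedTruncation_of_le)] at h
    simpa only [sum_normalizedTruncation_mul] using h
  have hM0 : 0 ≤ M := hB.exists.elim fun _ hn => ENNReal.toReal_nonneg.trans hn
  have hsub : {ω | ∃ s, x ≤ s ∧ Tendsto (S ω) atTop (nhds s)} ⊆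
      {ω | ∀ᶠ n in atTop, ω ∈ B n} ∪ {ω | Tendsto (S ω) atTop (nhds x)} := by
    rintro ω ⟨s, hxs, hs⟩
    rcases hxs.lt_or_eq with hlt | rfl
    · left
      have hlim := hs.div hnorm one_ne_zero
      rw [div_one] at hlim
      exact (hlim.eventually (eventually_ge_nhds hlt)).mono fun n hn => hn
    · exact Or.inr hs
  rw [tailProb]
  refine ENNReal.toReal_le_of_le_ofReal hM0 ?_
  calc μ {ω | ∃ s, x ≤ s ∧ Tendsto (S ω) atTop (nhds s)}
      ≤ μ {ω | ∀ᶠ n in atTop, ω ∈ B n} + μ {ω | Tendsto (S ω) atTop (nhds x)} :=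
        (measure_mono hsub).trans (measure_union_le _ _)
    _ ≤ ENNReal.ofReal M := by
        rw [hε.measure_tendsto_sum_eq_zero hinf ha0 x, add_zero]
        exact measure_setOf_eventually_mem_le (hB.mono fun n hn =>
          (ENNReal.le_ofReal_iff_toReal_le (measure_ne_top _ _) hM0).2 hn)

end Truncation

theorem eqTail_le_one {Ω : Type*} [MeasurableSpace Ω] (μ : Measure Ω) [IsProbabilityMeasure μ]
    (ε : ℕ → Ω → ℝ) (n : ℕ) (x : ℝ) : eqTail μ ε n x ≤ 1 :=
  measureReal_le_one

theorem Meqn_le_Meq {Ω : Type*} [MeasurableSpace Ω] (μ : Measure Ω) [IsProbabilityMeasure μ]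
    (ε : ℕ → Ω → ℝ) {n : ℕ} (hn : 1 ≤ n) (x : ℝ) : Meqn μ ε n x ≤ Meq μ ε x :=
  csSup_le_csSup ⟨1, by rintro p ⟨j, -, rfl⟩; exact eqTail_le_one μ ε j x⟩
    ⟨_, 1, le_rfl, hn, rfl⟩ fun _ ⟨j, hj, _, hp⟩ => ⟨j, hj, hp⟩

theorem rademacher_infinite_counterexample_implies_finite {Ω : Type*} [MeasurableSpace Ω] (μ : MeasureTheory.Measure Ω)
    [MeasureTheory.IsProbabilityMeasure μ] (ε : ℕ → Ω → ℝ) (hε : IsRademacherSeq μ ε) (x : ℝ)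
    (h : ∃ a : ℕ → ℝ, (∑' i, (a i) ^ 2) = 1 ∧ Meq μ ε x < tailProb μ ε a x) :
    ∃ (n : ℕ) (b : ℕ → ℝ), (∑' i, (b i) ^ 2) = 1 ∧ (∀ i, n ≤ i → b i = 0) ∧
      Meqn μ ε n x < tailProb μ ε b x := by
  obtain ⟨a, ha, hlt⟩ := h
  by_cases hfin : {i | a i ≠ 0}.Finite
  · obtain ⟨N, hN⟩ := hfin.bddAbove
    refine ⟨N + 1, a, ha, fun i hi => ?_, (Meqn_le_Meq μ ε N.succ_pos x).trans_lt hlt⟩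
    by_contra hai
    have := hN hai
    omega
  · by_contra! hcon
    exact hlt.not_ge (tailProb_le_of_forall_truncation hε ha hfin fun n hn b hb hbn =>
      (hcon n b hb hbn).trans (Meqn_le_Meq μ ε hn x))
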